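/- arXiv:math/0303323 — 2 statements merged into one kernel-verified Lean document; each statement's English description precedes it below -/
import Mathlib

section
/- Let 𝔇 be a nonempty symmetric set of tournaments on X, each of which is balanced. Then for all distinct x, y, z ∈ X the weighted tournament t^{⟨x,y,z⟩} belongs to pr-cl(𝔇). -/
open scoped BigOperators

variable {X : Type*}

/-- A tournament on `X`: irreflexive and, on distinct points, exactly one direction holds. -/
def IsTournament (R : X → X → Prop) : Prop :=
  (∀ x, ¬ R x x) ∧ ∀ x y : X, x ≠ y → (R x y ↔ ¬ R y x)

/-- Out-degree of `x` in the relation `R`. -/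
noncomputable def valT (R : X → X → Prop) (x : X) : ℕ :=
  Set.ncard {y | R x y}

/-- A tournament is balanced if every out-degree equals `(n-1)/2`. -/
def IsBalanced [Fintype X] (R : X → X → Prop) : Prop :=
  ∀ x : X, (valT R x : ℝ) = ((Fintype.card X : ℝ) - 1) / 2

/-- Action of a permutation on a relation. -/
def permAct (π : Equiv.Perm X) (R : X → X → Prop) : X → X → Prop :=
  fun x y => R (π.symm x) (π.symm y)

/-- A set of relations closed under the permutation action. -/
def SymmetricSet (D : Set (X → X → Prop)) : Prop :=
  ∀ (π : Equiv.Perm X), ∀ R ∈ D, permAct π R ∈ D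

/-- The majority closure of a set of tournaments. -/
def majCl [Fintype X] (D : Set (X → X → Prop)) : Set (X → X → Prop) :=
  {d | IsTournament d ∧ ∃ w : (X → X → Prop) → ℝ,
    (∀ c, 0 ≤ w c ∧ w c ≤ 1) ∧
    (∀ c, w c ≠ 0 → c ∈ D) ∧
    (Function.support w).Finite ∧
    (∑ᶠ c, w c) = 1 ∧
    ∀ x y : X, x ≠ y →
      (d x y ↔ 1 / 2 < ∑ᶠ c ∈ {c : X → X → Prop | c ∈ D ∧ c x y}, w c)}

open Classical in
noncomputable def tOf (d : X → X → Prop) : X → X → ℝ :=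
  fun x y => if d x y then 1 else 0

/-- pr-cl: the convex hull of `{t[d] : d ∈ D}`. -/
noncomputable def prCl (D : Set (X → X → Prop)) : Set (X → X → ℝ) :=
  convexHull ℝ (tOf '' D)

/-- `t` is a weighted tournament. -/
def IsWeighted (t : X → X → ℝ) : Prop :=
  ∀ x y : X, x ≠ y → 0 ≤ t x y ∧ t x y ≤ 1 ∧ t y x = 1 - t x y

/-- A weighted tournament is balanced if each row sums to `(n-1)/2`. -/
def BalancedW [Fintype X] (t : X → X → ℝ) : Prop :=
  ∀ x : X, (∑ᶠ y ∈ {y : X | y ≠ x}, t x y) = ((Fintype.card X : ℝ) - 1) / 2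

/-- A tournament is pseudo-balanced if it is dominated by a balanced weighted tournament. -/
def PseudoBalanced [Fintype X] (c : X → X → Prop) : Prop :=
  ∃ t : X → X → ℝ, IsWeighted t ∧ BalancedW t ∧
    ∀ x y : X, x ≠ y → c x y → 1 / 2 < t x y

open Classical in
noncomputable def tConfig (x y : X) (a s0 s1 : ℝ) : X → X → ℝ :=
  fun u v =>
    if u = v then 0
    else if u = x ∧ v = y then a
    else if u = y ∧ v = x then 1 - a
    else if u = x then s0
    else if v = x then 1 - s0
    else if u = y then s1
    else if v = y then 1 - s1
    else 1 / 2

/-- `Prd_ℓ(𝒟)`. -/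
noncomputable def PrdL [Fintype X] (l : ℕ) (D : Set (X → X → Prop)) : Set (ℝ × ℝ) :=
  {p | ∃ c ∈ D, ∃ x y : X, x ≠ y ∧ (c x y ↔ l = 1) ∧
    p.1 = (Set.ncard {z : X | z ≠ x ∧ z ≠ y ∧ c x z} : ℝ) / ((Fintype.card X : ℝ) - 2) ∧
    p.2 = (Set.ncard {z : X | z ≠ x ∧ z ≠ y ∧ c y z} : ℝ) / ((Fintype.card X : ℝ) - 2)}

/-- `Pr_A(𝒟)`. -/
noncomputable def PrA [Fintype X] (A : Set ℝ) (D : Set (X → X → Prop)) : Set (ℝ × ℝ) :=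
  {p | 0 ≤ p.1 ∧ p.1 ≤ 1 ∧ 0 ≤ p.2 ∧ p.2 ≤ 1 ∧
    ∃ x y : X, x ≠ y ∧ ∃ a ∈ A, tConfig x y a p.1 p.2 ∈ prCl D}

/-- `V_ℓ(d)` as a subset of `ℝ²`. -/
noncomputable def Vset [Fintype X] (l : ℕ) (d : X → X → Prop) : Set (ℝ × ℝ) :=
  {p | ∃ x y : X, x ≠ y ∧ (if l = 1 then d x y else d y x) ∧
    p = ((valT d x : ℝ), (valT d y : ℝ))}

/-- `V*_ℓ(d)`. -/
noncomputable def VstarSet [Fintype X] (l : ℕ) (d : X → X → Prop) : Set (ℝ × ℝ) :=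
  {p | ∃ q ∈ Vset l d, p = (q.1 - (l : ℝ), q.2 - (1 - (l : ℝ)))}

open Classical in
noncomputable def tCycle (k : ℕ) (xs : ℕ → X) (a : ℝ) : X → X → ℝ :=
  fun u v =>
    if u = v then 0
    else if ∃ i < k, u = xs i ∧ v = xs ((i + 1) % k) then a
    else if ∃ i < k, v = xs i ∧ u = xs ((i + 1) % k) then 1 - a
    else 1 / 2

open Classical in
noncomputable def tTriple (x y z : X) : X → X → ℝ :=
  fun u v =>
    if u = v then 0
    else if (u, v) = (x, y) ∨ (u, v) = (y, z) ∨ (u, v) = (z, x) then 1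
    else if (u, v) = (y, x) ∨ (u, v) = (z, y) ∨ (u, v) = (x, z) then 0
    else 1 / 2

/-- The dual (reverse) tournament. -/
def dualT (c : X → X → Prop) : X → X → Prop := fun x y => c y x

/-- The symmetric closure (orbit) of a single tournament. -/
def symCl (c : X → X → Prop) : Set (X → X → Prop) :=
  {d | ∃ π : Equiv.Perm X, d = permAct π c}


/-!
Every balanced tournament contains a 3-cycle, so by symmetry of `𝒟` some `d ∈ 𝒟` has the cycle
`x → y → z → x`. Average `t[σ · d]` over the permutations `σ` fixing `x`, `y`, `z`: the result lies
in `pr-cl(𝒟)` and agrees with `d` on the triangle. It is invariant under transpositions of points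
outside the triangle, hence equals `1/2` on pairs outside it, and is constant on pairs `(u, w)` with
`u` in the triangle and `w` outside. That constant is `1/2` because, by balance, `u` has exactly
`(n - 3) / 2` out-neighbours outside the triangle in every `σ · d`.
-/

open Equiv

section Tournament

variable {c : X → X → Prop}

lemma IsTournament.ne (hc : IsTournament c) {u v : X} (huv : c u v) : u ≠ v :=
  fun h => hc.1 u (h ▸ huv)

lemma IsTournament.permAct (hc : IsTournament c) (π : Perm X) : IsTournament (permAct π c) :=
  ⟨fun _ => hc.1 _, fun _ _ h => hc.2 _ _ (π.symm.injective.ne h)⟩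

lemma tOf_self (hc : IsTournament c) (u : X) : tOf c u u = 0 := by
  simp [tOf, hc.1 u]

lemma tOf_add_tOf_swap (hc : IsTournament c) {u v : X} (huv : u ≠ v) :
    tOf c u v + tOf c v u = 1 := by
  have := hc.2 u v huv
  by_cases h : c u v <;> simp_all [tOf]

lemma tOf_permAct (π : Perm X) (u v : X) :
    tOf (permAct π c) u v = tOf c (π.symm u) (π.symm v) := rfl

lemma sum_tOf_eq_ncard (s : Finset X) (u : X) :
    ∑ w ∈ s, tOf c u w = ({w | w ∈ s ∧ c u w}.ncard : ℝ) := by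
  classical
  rw [← Finset.coe_filter, Set.ncard_coe_finset, ← Finset.sum_boole]
  rfl

lemma IsBalanced.exists_cycle [Fintype X] [Nontrivial X] (hb : IsBalanced c)
    (hc : IsTournament c) : ∃ a b e, c a b ∧ c b e ∧ c e a := by
  obtain ⟨p, q, hpq⟩ := exists_pair_ne X
  obtain ⟨t, a, hta⟩ : ∃ t a, c t a := by
    by_cases h : c p q
    · exact ⟨p, q, h⟩
    · exact ⟨q, p, not_not.mp ((hc.2 p q hpq).not.mp h)⟩
  have hval : valT c a = valT c t := by exact_mod_cast (hb a).trans (hb t).symm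
  -- `a` and `t` have equally many out-neighbours, and `t` already beats `a`.
  have hnsub : ¬ insert a {w | c a w} ⊆ {w | c t w} := fun hsub => by
    have := Set.ncard_le_ncard hsub (Set.toFinite _)
    rw [Set.ncard_insert_of_notMem (show a ∉ {w | c a w} from hc.1 a) (Set.toFinite _)] at this
    exact absurd hval (by unfold valT; omega)
  obtain ⟨w, hw, htw⟩ := Set.not_subset.mp hnsub
  rcases hw with rfl | haw
  · exact absurd hta htw
  · have hwt : w ≠ t := by
      rintro rfl
      exact (hc.2 a w (hc.ne haw)).mp haw hta
    exact ⟨a, w, t, haw, not_not.mp ((hc.2 t w hwt.symm).not.mp htw), hta⟩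

lemma IsBalanced.ncard_out_notMem_of_cycle [Fintype X] [DecidableEq X] (hb : IsBalanced c)
    (hc : IsTournament c) {x y z : X} (hxy : c x y) (hzx : c z x) :
    ({w | w ∉ ({x, y, z} : Finset X) ∧ c x w}.ncard : ℝ) = (Fintype.card X - 3) / 2 := by
  have hout : {w | c x w} = insert y {w | w ∉ ({x, y, z} : Finset X) ∧ c x w} := by
    ext w
    simp only [Set.mem_ofPred_eq, Set.mem_insert_iff, Finset.mem_insert, Finset.mem_singleton]
    constructor
    · intro hw
      have hwx : w ≠ x := (hc.ne hw).symm
      have hwz : w ≠ z := by rintro rfl; exact (hc.2 w x hwx).mp hzx hw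
      tauto
    · rintro (rfl | ⟨-, hw⟩) <;> assumption
  have hy : y ∉ {w | w ∉ ({x, y, z} : Finset X) ∧ c x w} := by simp
  have := hb x
  rw [valT, hout, Set.ncard_insert_of_notMem hy (Set.toFinite _)] at this
  push_cast at this
  linarith

lemma exists_permAct_cycle (hc : IsTournament c) {a b e : X} (hab : c a b) (hbe : c b e)
    (hea : c e a) {x y z : X} (hxy : x ≠ y) (hyz : y ≠ z) (hxz : x ≠ z) :
    ∃ π : Perm X, permAct π c x y ∧ permAct π c y z ∧ permAct π c z x := by
  have hinj : ∀ {p q r : X}, p ≠ q → q ≠ r → p ≠ r → Function.Injective ![p, q, r] := by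
    intro p q r hpq hqr hpr i j
    fin_cases i <;> fin_cases j <;> simp [hpq, hqr, hpr, hpq.symm, hqr.symm, hpr.symm]
  obtain ⟨π, hπ⟩ := Perm.exists_extending_pair _ _
    (hinj (hc.ne hab) (hc.ne hbe) (hc.ne hea).symm) (hinj hxy hyz hxz)
  have ha : π a = x := hπ 0
  have hb : π b = y := hπ 1
  have he : π e = z := hπ 2
  refine ⟨π, ?_, ?_, ?_⟩ <;> simpa [permAct, ← ha, ← hb, ← he]

end Tournament

lemma symm_apply_of_mem_fixingSubgroup {s : Set X} {σ : Perm X}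
    (hσ : σ ∈ fixingSubgroup (Perm X) s) {u : X} (hu : u ∈ s) : σ.symm u = u :=
  σ.symm_apply_eq.mpr ((mem_fixingSubgroup_iff _).mp hσ u hu).symm

lemma swap_mem_fixingSubgroup [DecidableEq X] {s : Set X} {u v : X} (hu : u ∉ s) (hv : v ∉ s) :
    swap u v ∈ fixingSubgroup (Perm X) s :=
  (mem_fixingSubgroup_iff _).mpr fun _ hw =>
    swap_apply_of_ne_of_ne (ne_of_mem_of_not_mem hw hu) (ne_of_mem_of_not_mem hw hv)

section FixingAverage

variable [Fintype X] [DecidableEq X] {d : X → X → Prop}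

open scoped Classical in
noncomputable def fixAvg (F : Finset X) (d : X → X → Prop) : X → X → ℝ :=
  ∑ σ : fixingSubgroup (Perm X) (F : Set X),
    (Fintype.card (fixingSubgroup (Perm X) (F : Set X)) : ℝ)⁻¹ • tOf (permAct σ d)

lemma fixAvg_mem_prCl {D : Set (X → X → Prop)} (hsym : SymmetricSet D) (hd : d ∈ D)
    (F : Finset X) : fixAvg F d ∈ prCl D := by
  classical
  refine (convex_convexHull ℝ _).sum_mem (fun _ _ => by positivity) ?_
    fun σ _ => subset_convexHull ℝ _ ⟨_, hsym σ d hd, rfl⟩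
  simp [Finset.card_univ]

variable {F : Finset X}

open scoped Classical in
lemma fixAvg_apply (u v : X) :
    fixAvg F d u v = (Fintype.card (fixingSubgroup (Perm X) (F : Set X)) : ℝ)⁻¹ *
      ∑ σ : fixingSubgroup (Perm X) (F : Set X), tOf (permAct σ d) u v := by
  simp [fixAvg, Finset.sum_apply, Finset.mul_sum]

lemma fixAvg_apply_perm {τ : Perm X} (hτ : τ ∈ fixingSubgroup (Perm X) (F : Set X)) (u v : X) :
    fixAvg F d (τ u) (τ v) = fixAvg F d u v := by
  classical
  simp only [fixAvg_apply]
  congr 1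
  refine Fintype.sum_equiv (Equiv.mulLeft ⟨τ⁻¹, inv_mem hτ⟩) _ _ fun σ => ?_
  simp [tOf_permAct, ← Perm.inv_def, mul_inv_rev, Perm.mul_apply]

lemma fixAvg_self (hd : IsTournament d) (u : X) : fixAvg F d u u = 0 := by
  simp [fixAvg_apply, tOf_permAct, tOf_self hd]

lemma fixAvg_add_swap (hd : IsTournament d) {u v : X} (huv : u ≠ v) :
    fixAvg F d u v + fixAvg F d v u = 1 := by
  classical
  simp only [fixAvg_apply, ← mul_add, ← Finset.sum_add_distrib, tOf_permAct]
  rw [Finset.sum_congr rfl fun σ _ => tOf_add_tOf_swap hd (σ.1.symm.injective.ne huv)]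
  simp

lemma fixAvg_of_mem {u v : X} (hu : u ∈ F) (hv : v ∈ F) : fixAvg F d u v = tOf d u v := by
  classical
  rw [fixAvg_apply, Finset.sum_congr rfl fun σ _ => by
    rw [tOf_permAct, symm_apply_of_mem_fixingSubgroup σ.2 hu,
      symm_apply_of_mem_fixingSubgroup σ.2 hv]]
  simp

lemma fixAvg_comm_of_notMem {u v : X} (hu : u ∉ F) (hv : v ∉ F) :
    fixAvg F d u v = fixAvg F d v u := by
  simpa using fixAvg_apply_perm (d := d) (swap_mem_fixingSubgroup hu hv) v u

lemma fixAvg_eq_of_notMem {u v v' : X} (hu : u ∈ F) (hv : v ∉ F) (hv' : v' ∉ F) :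
    fixAvg F d u v = fixAvg F d u v' := by
  have := fixAvg_apply_perm (d := d) (swap_mem_fixingSubgroup hv hv') u v
  rwa [swap_apply_left, swap_apply_of_ne_of_ne (ne_of_mem_of_not_mem hu hv)
    (ne_of_mem_of_not_mem hu hv'), eq_comm] at this

lemma fixAvg_eq_div_of_mem_of_notMem {u v : X} (hu : u ∈ F) (hv : v ∉ F) {k : ℝ}
    (hk : ∀ σ ∈ fixingSubgroup (Perm X) (F : Set X),
      ({w | w ∉ F ∧ permAct σ d u w}.ncard : ℝ) = k) :
    fixAvg F d u v = k / (Fᶜ.card : ℝ) := by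
  classical
  have hsum : ∑ w ∈ Fᶜ, fixAvg F d u w = k := by
    simp only [fixAvg_apply, ← Finset.mul_sum]
    rw [Finset.sum_comm, Finset.sum_congr rfl fun σ _ =>
      (sum_tOf_eq_ncard _ _).trans (by simpa using hk σ σ.2)]
    simp
  rw [Finset.sum_congr rfl fun w hw => fixAvg_eq_of_notMem hu (Finset.mem_compl.mp hw) hv,
    Finset.sum_const, nsmul_eq_mul] at hsum
  have : (0 : ℝ) < Fᶜ.card := by exact_mod_cast Finset.card_pos.mpr ⟨v, Finset.mem_compl.mpr hv⟩
  field_simp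
  linarith

end FixingAverage

lemma tTriple_self (x y z u : X) : tTriple x y z u u = 0 := by
  simp [tTriple]

section Triangle

variable [DecidableEq X] {c : X → X → Prop} {x y z : X}

lemma tTriple_eq_half {u v : X} (huv : u ≠ v)
    (h : ¬ (u ∈ ({x, y, z} : Finset X) ∧ v ∈ ({x, y, z} : Finset X))) :
    tTriple x y z u v = 1 / 2 := by
  simp only [tTriple, if_neg huv]
  rw [if_neg, if_neg] <;> simp only [Prod.mk.injEq] <;> aesop

lemma tTriple_eq_tOf (hc : IsTournament c) (hxy : c x y) (hyz : c y z) (hzx : c z x) {u v : X}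
    (hu : u ∈ ({x, y, z} : Finset X)) (hv : v ∈ ({x, y, z} : Finset X)) :
    tTriple x y z u v = tOf c u v := by
  have hyx : ¬ c y x := (hc.2 x y (hc.ne hxy)).mp hxy
  have hzy : ¬ c z y := (hc.2 y z (hc.ne hyz)).mp hyz
  have hxz : ¬ c x z := (hc.2 z x (hc.ne hzx)).mp hzx
  have hnxy := hc.ne hxy
  have hnyz := hc.ne hyz
  have hnzx := hc.ne hzx
  simp only [Finset.mem_insert, Finset.mem_singleton] at hu hv
  rcases hu with rfl | rfl | rfl <;> rcases hv with rfl | rfl | rfl <;>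
    simp [tTriple, tOf, *, hnxy.symm, hnyz.symm, hnzx.symm, hc.1]

lemma fixAvg_eq_tTriple [Fintype X] (hc : IsTournament c)
    (hbal : ∀ π : Perm X, IsBalanced (permAct π c)) (hxy : c x y) (hyz : c y z) (hzx : c z x) :
    fixAvg {x, y, z} c = tTriple x y z := by
  set F : Finset X := {x, y, z} with hF
  have hFc : (Fᶜ.card : ℝ) = Fintype.card X - 3 := by
    have h3 : F.card = 3 :=
      Finset.card_eq_three.mpr ⟨x, y, z, hc.ne hxy, (hc.ne hzx).symm, hc.ne hyz, rfl⟩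
    rw [Finset.card_compl, Nat.cast_sub (h3 ▸ F.card_le_univ), h3, Nat.cast_ofNat]
  have hout : ∀ u ∈ F, ∀ σ ∈ fixingSubgroup (Perm X) (F : Set X),
      ({w | w ∉ F ∧ permAct σ c u w}.ncard : ℝ) = (Fintype.card X - 3) / 2 := by
    intro u hu σ hσ
    have hfix : ∀ {p q}, p ∈ F → q ∈ F → c p q → permAct σ c p q := fun hp hq hpq => by
      simpa [permAct, symm_apply_of_mem_fixingSubgroup hσ hp,
        symm_apply_of_mem_fixingSubgroup hσ hq]
    have hx : x ∈ F := by simp [hF]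
    have hy : y ∈ F := by simp [hF]
    have hz : z ∈ F := by simp [hF]
    have hxy' := hfix hx hy hxy
    have hyz' := hfix hy hz hyz
    have hzx' := hfix hz hx hzx
    simp only [hF, Finset.mem_insert, Finset.mem_singleton] at hu
    rcases hu with rfl | rfl | rfl
    · exact (hbal σ).ncard_out_notMem_of_cycle (hc.permAct σ) hxy' hzx'
    · rw [show F = {u, z, x} by ext; simp [hF]; tauto]
      exact (hbal σ).ncard_out_notMem_of_cycle (hc.permAct σ) hyz' hxy'
    · rw [show F = {u, x, y} by ext; simp [hF]; tauto]
      exact (hbal σ).ncard_out_notMem_of_cycle (hc.permAct σ) hzx' hyz'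
  have half_of_mem : ∀ {u v}, u ∈ F → v ∉ F → fixAvg F c u v = 1 / 2 := by
    intro u v hu hv
    have : (0 : ℝ) < Fᶜ.card := by
      exact_mod_cast Finset.card_pos.mpr ⟨v, Finset.mem_compl.mpr hv⟩
    rw [fixAvg_eq_div_of_mem_of_notMem hu hv (hout u hu), ← hFc]
    field_simp
  funext u v
  by_cases huv : u = v
  · subst huv
    rw [fixAvg_self hc, tTriple_self]
  by_cases huvF : u ∈ F ∧ v ∈ F
  · rw [fixAvg_of_mem huvF.1 huvF.2, tTriple_eq_tOf hc hxy hyz hzx huvF.1 huvF.2]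
  rw [tTriple_eq_half huv huvF]
  have hsum := fixAvg_add_swap (F := F) hc huv
  by_cases hu : u ∈ F
  · exact half_of_mem hu fun hv => huvF ⟨hu, hv⟩
  by_cases hv : v ∈ F
  · linarith [half_of_mem hv hu]
  · linarith [fixAvg_comm_of_notMem (d := c) hu hv]

end Triangle

theorem stmt15_general [Fintype X]
    (D : Set (X → X → Prop)) (hne : D.Nonempty) (hT : ∀ c ∈ D, IsTournament c)
    (hsym : SymmetricSet D) (hbal : ∀ c ∈ D, IsBalanced c)
    (x y z : X) (hxy : x ≠ y) (hyz : y ≠ z) (hxz : x ≠ z) :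
    tTriple x y z ∈ prCl D := by
  classical
  obtain ⟨c, hc⟩ := hne
  have : Nontrivial X := ⟨⟨x, y, hxy⟩⟩
  obtain ⟨a, b, e, hab, hbe, hea⟩ := (hbal c hc).exists_cycle (hT c hc)
  obtain ⟨π, hxy', hyz', hzx'⟩ := exists_permAct_cycle (hT c hc) hab hbe hea hxy hyz hxz
  have hd : permAct π c ∈ D := hsym π c hc
  rw [← fixAvg_eq_tTriple (hT _ hd) (fun σ => hbal _ (hsym σ _ hd)) hxy' hyz' hzx']
  exact fixAvg_mem_prCl hsym hd _

theorem stmt15 [Fintype X] (hcard : 3 ≤ Fintype.card X)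
    (D : Set (X → X → Prop)) (hne : D.Nonempty) (hT : ∀ c ∈ D, IsTournament c)
    (hsym : SymmetricSet D) (hbal : ∀ c ∈ D, IsBalanced c)
    (x y z : X) (hxy : x ≠ y) (hyz : y ≠ z) (hxz : x ≠ z) :
    tTriple x y z ∈ prCl D :=
  stmt15_general D hne hT hsym hbal x y z hxy hyz hxz
end

section
/- Let 𝔇 be a nonempty symmetric set of tournaments on X and let c* be a pseudo-balanced tournament on X. Then c* ∈ maj-cl(𝔇). -/
open scoped BigOperators

variable {X : Type*}

/-!
Fix `c₀ ∈ 𝒟` and let `a(u, v) = ±1` be its signed adjacency. A balanced weighted tournament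
dominating `c` yields a skew matrix `G` with zero row sums whose sign pattern is `c`. Weight the
relabelled copies `τ • c₀` (all in `𝒟`) by `1 + ε ∑ₛₜ G s t a(τ s, τ t)`; the margin of `x` over
`y` is then `1/2 + κ ∑_τ (∑ₛₜ G s t a(τ s, τ t)) a(τ x, τ y)`. Averaging over the symmetric group
turns this correlation into `2 (n! - 2k) G x y`, where `k` is the correlation of the pairs
`(x, z)` and `(x, y)`; a cyclic relabelling of `x, y, z` shows `3k ≤ n!`, because for three
points the three products `a(u, w) a(u, v)`, `a(v, w) a(v, u)`, `a(w, u) a(w, v)` cannot all be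
`1`. So the margin exceeds `1/2` exactly when `G x y > 0`, i.e. when `c x y`.
-/

open Finset Equiv

section

open scoped Classical

noncomputable def signedAdj (c : X → X → Prop) (u v : X) : ℝ :=
  (if c u v then 1 else 0) - (if c v u then 1 else 0)

lemma signedAdj_swap (c : X → X → Prop) (u v : X) : signedAdj c v u = -signedAdj c u v := by
  rw [signedAdj, signedAdj, neg_sub]

lemma signedAdj_self (c : X → X → Prop) (u : X) : signedAdj c u u = 0 :=
  sub_self _

namespace IsTournament

variable {c : X → X → Prop} {u v w : X}

lemma rel_of_not_rel (hc : IsTournament c) (huv : u ≠ v) (h : ¬ c u v) : c v u :=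
  (hc.2 v u huv.symm).mpr h

lemma signedAdj_of_rel (hc : IsTournament c) (huv : u ≠ v) (h : c u v) :
    signedAdj c u v = 1 := by
  simp [signedAdj, h, (hc.2 u v huv).mp h]

lemma signedAdj_eq_one_or_neg_one (hc : IsTournament c) (huv : u ≠ v) :
    signedAdj c u v = 1 ∨ signedAdj c u v = -1 := by
  by_cases h : c u v
  · exact Or.inl (hc.signedAdj_of_rel huv h)
  · right
    rw [← neg_neg (signedAdj c u v), ← signedAdj_swap,
      hc.signedAdj_of_rel huv.symm (hc.rel_of_not_rel huv h)]

lemma signedAdj_mul_self (hc : IsTournament c) (huv : u ≠ v) :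
    signedAdj c u v * signedAdj c u v = 1 := by
  rcases hc.signedAdj_eq_one_or_neg_one huv with h | h <;> rw [h] <;> norm_num

lemma ite_rel_eq (hc : IsTournament c) (huv : u ≠ v) :
    (if c u v then (1 : ℝ) else 0) = (1 + signedAdj c u v) / 2 := by
  by_cases h : c u v
  · rw [if_pos h, hc.signedAdj_of_rel huv h]; norm_num
  · rw [if_neg h, ← neg_neg (signedAdj c u v), ← signedAdj_swap,
      hc.signedAdj_of_rel huv.symm (hc.rel_of_not_rel huv h)]; norm_num

/-- The three summands are `±1` with product `-1`, so they cannot all equal `1`. -/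
lemma signedAdj_triangle_le (hc : IsTournament c) (huv : u ≠ v) (huw : u ≠ w) (hvw : v ≠ w) :
    signedAdj c u w * signedAdj c u v + signedAdj c v w * signedAdj c v u
      + signedAdj c w u * signedAdj c w v ≤ 1 := by
  rw [signedAdj_swap c u v, signedAdj_swap c u w, signedAdj_swap c v w]
  rcases hc.signedAdj_eq_one_or_neg_one huv with h₁ | h₁ <;>
    rcases hc.signedAdj_eq_one_or_neg_one huw with h₂ | h₂ <;>
    rcases hc.signedAdj_eq_one_or_neg_one hvw with h₃ | h₃ <;>
    rw [h₁, h₂, h₃] <;> norm_num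

end IsTournament

variable [Fintype X]

section Correlation

lemma sum_perm_signedAdj (c : X → X → Prop) (s t : X) :
    ∑ τ : Perm X, signedAdj c (τ s) (τ t) = 0 := by
  have h := Equiv.sum_comp (Equiv.mulRight (swap s t)) fun τ : Perm X => signedAdj c (τ s) (τ t)
  simp only [coe_mulRight, Perm.mul_apply, swap_apply_left, swap_apply_right] at h
  rw [sum_congr rfl fun τ _ => signedAdj_swap c (τ s) (τ t), sum_neg_distrib] at h
  linarith

noncomputable def signedAdjCorr (c : X → X → Prop) (x y s t : X) : ℝ :=
  ∑ τ : Perm X, signedAdj c (τ s) (τ t) * signedAdj c (τ x) (τ y)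

variable (c : X → X → Prop) {x y s t z : X}

lemma signedAdjCorr_perm (σ : Perm X) (x y s t : X) :
    signedAdjCorr c (σ x) (σ y) (σ s) (σ t) = signedAdjCorr c x y s t :=
  Equiv.sum_comp (Equiv.mulRight σ) fun τ : Perm X =>
    signedAdj c (τ s) (τ t) * signedAdj c (τ x) (τ y)

lemma signedAdjCorr_self (x y s : X) : signedAdjCorr c x y s s = 0 := by
  simp [signedAdjCorr, signedAdj_self]

lemma signedAdjCorr_swap_right (x y s t : X) :
    signedAdjCorr c x y t s = -signedAdjCorr c x y s t := by
  rw [signedAdjCorr, signedAdjCorr, ← sum_neg_distrib]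
  exact sum_congr rfl fun τ _ => by rw [signedAdj_swap c (τ s), neg_mul]

lemma signedAdjCorr_swap_left (x y s t : X) :
    signedAdjCorr c y x s t = -signedAdjCorr c x y s t := by
  rw [signedAdjCorr, signedAdjCorr, ← sum_neg_distrib]
  exact sum_congr rfl fun τ _ => by rw [signedAdj_swap c (τ x), mul_neg]

lemma signedAdjCorr_left_eq (htx : t ≠ x) (hty : t ≠ y) (hzx : z ≠ x) (hzy : z ≠ y) :
    signedAdjCorr c x y x t = signedAdjCorr c x y x z := by
  have h := signedAdjCorr_perm c (swap t z) x y x t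
  rwa [swap_apply_of_ne_of_ne htx.symm hzx.symm, swap_apply_of_ne_of_ne hty.symm hzy.symm,
    swap_apply_left, eq_comm] at h

lemma signedAdjCorr_right_eq (htx : t ≠ x) (hty : t ≠ y) :
    signedAdjCorr c x y y t = -signedAdjCorr c x y x t := by
  have h := signedAdjCorr_perm c (swap x y) x y x t
  rw [swap_apply_left, swap_apply_right, swap_apply_of_ne_of_ne htx hty,
    signedAdjCorr_swap_left] at h
  linarith

lemma signedAdjCorr_eq_zero (hsx : s ≠ x) (hsy : s ≠ y) (htx : t ≠ x) (hty : t ≠ y) :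
    signedAdjCorr c x y s t = 0 := by
  have h := signedAdjCorr_perm c (swap s t) x y s t
  rw [swap_apply_of_ne_of_ne hsx.symm htx.symm, swap_apply_of_ne_of_ne hsy.symm hty.symm,
    swap_apply_left, swap_apply_right, signedAdjCorr_swap_right] at h
  linarith

variable {c}

lemma IsTournament.signedAdjCorr_eq_factorial (hc : IsTournament c) (hxy : x ≠ y) :
    signedAdjCorr c x y x y = (Fintype.card X).factorial := by
  simp [signedAdjCorr, fun τ : Perm X => hc.signedAdj_mul_self (τ.injective.ne hxy),
    Fintype.card_perm]

lemma IsTournament.three_mul_signedAdjCorr_le (hc : IsTournament c) (hxy : x ≠ y) (hzx : z ≠ x)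
    (hzy : z ≠ y) : 3 * signedAdjCorr c x y x z ≤ (Fintype.card X).factorial := by
  have hy : signedAdjCorr c y x y z = signedAdjCorr c x y x z := by
    simpa [swap_apply_of_ne_of_ne hzx hzy] using signedAdjCorr_perm c (swap x y) x y x z
  have hz : signedAdjCorr c z y z x = signedAdjCorr c x y x z := by
    simpa [swap_apply_of_ne_of_ne hxy.symm hzy.symm] using
      signedAdjCorr_perm c (swap x z) x y x z
  calc 3 * signedAdjCorr c x y x z
      = signedAdjCorr c x y x z + signedAdjCorr c y x y z + signedAdjCorr c z y z x := by
        rw [hy, hz]; ring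
    _ ≤ ∑ _τ : Perm X, (1 : ℝ) := by
        simp only [signedAdjCorr, ← sum_add_distrib]
        exact sum_le_sum fun τ _ => hc.signedAdj_triangle_le (τ.injective.ne hxy)
          (τ.injective.ne hzx.symm) (τ.injective.ne hzy.symm)
    _ = (Fintype.card X).factorial := by simp [Fintype.card_perm]

lemma exists_ne_ne_of_three_le_card (hcard : 3 ≤ Fintype.card X) (x y : X) :
    ∃ z, z ≠ x ∧ z ≠ y := by
  obtain ⟨z, hz⟩ : ((univ.erase x).erase y).Nonempty := by
    rw [← card_pos]
    have := (univ.erase x).pred_card_le_card_erase (a := y)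
    simp only [card_erase_of_mem (mem_univ x), card_univ] at this
    omega
  simp only [mem_erase] at hz
  exact ⟨z, hz.2.1, hz.1⟩

/-- The symmetries above leave two free values, at `(x, y)` and at `(x, z)` for a third
point `z`; the second one is the constant `k`. -/
lemma IsTournament.exists_signedAdjCorr_eq (hc : IsTournament c) (hcard : 3 ≤ Fintype.card X)
    (hxy : x ≠ y) :
    ∃ k : ℝ, 3 * k ≤ (Fintype.card X).factorial ∧ ∀ s t, signedAdjCorr c x y s t =
      k * (((if s = x then 1 else 0) - (if s = y then 1 else 0))
          - ((if t = x then 1 else 0) - (if t = y then 1 else 0)))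
        + ((Fintype.card X).factorial - 2 * k)
          * ((if s = x ∧ t = y then 1 else 0) - (if s = y ∧ t = x then 1 else 0)) := by
  obtain ⟨z, hzx, hzy⟩ := exists_ne_ne_of_three_le_card hcard x y
  refine ⟨signedAdjCorr c x y x z, hc.three_mul_signedAdjCorr_le hxy hzx hzy, fun s t => ?_⟩
  have hyx := hxy.symm
  have hout : ∀ {t}, t ≠ x → t ≠ y → signedAdjCorr c x y x t = signedAdjCorr c x y x z :=
    fun htx hty => signedAdjCorr_left_eq c htx hty hzx hzy
  rcases eq_or_ne s t with rfl | hst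
  · simp [signedAdjCorr_self, and_comm]
  obtain rfl | rfl | ⟨hsx, hsy⟩ : x = s ∨ y = s ∨ (s ≠ x ∧ s ≠ y) := by tauto
  all_goals obtain rfl | rfl | ⟨htx, hty⟩ : x = t ∨ y = t ∨ (t ≠ x ∧ t ≠ y) := by tauto
  · exact absurd rfl hst
  · simp only [hc.signedAdjCorr_eq_factorial hxy, ↓reduceIte, hxy, hyx, sub_zero, zero_sub,
      sub_neg_eq_add, and_self, mul_one]
    ring
  · simp [hxy, htx, hty, hout htx hty]
  · simp only [signedAdjCorr_swap_right c x y x y, hc.signedAdjCorr_eq_factorial hxy,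
      ↓reduceIte, hxy, hyx, sub_zero, zero_sub, and_self, mul_neg, mul_one, neg_sub]
    ring
  · exact absurd rfl hst
  · simp [hyx, htx, hty, signedAdjCorr_right_eq c htx hty, hout htx hty]
  · simp [hxy, hsx, hsy, signedAdjCorr_swap_right c x y x s, hout hsx hsy]
  · simp [hyx, hsx, hsy, signedAdjCorr_swap_right c x y y s, signedAdjCorr_right_eq c hsx hsy,
      hout hsx hsy]
  · simp [hsx, hsy, htx, hty, signedAdjCorr_eq_zero c hsx hsy htx hty]

theorem IsTournament.exists_sum_perm_mul_signedAdj (hc : IsTournament c)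
    (hcard : 3 ≤ Fintype.card X) {G : X → X → ℝ} (hskew : ∀ s t, G t s = -G s t)
    (hrow : ∀ s, ∑ t, G s t = 0) (hxy : x ≠ y) :
    ∃ K > 0, ∑ τ : Perm X, (∑ s, ∑ t, G s t * signedAdj c (τ s) (τ t))
      * signedAdj c (τ x) (τ y) = K * G x y := by
  obtain ⟨k, hk, hcorr⟩ := hc.exists_signedAdjCorr_eq hcard hxy
  have hcol : ∀ t, ∑ s, G s t = 0 := fun t => by
    rw [Fintype.sum_congr _ _ fun s => hskew t s, sum_neg_distrib, hrow, neg_zero]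
  have hN : (0 : ℝ) < (Fintype.card X).factorial := by positivity
  refine ⟨2 * ((Fintype.card X).factorial - 2 * k), by linarith, ?_⟩
  calc _ = ∑ s, ∑ t, G s t * signedAdjCorr c x y s t := by
        simp only [signedAdjCorr, mul_sum, sum_mul, mul_assoc]
        rw [sum_comm]
        exact sum_congr rfl fun s _ => sum_comm
    _ = _ := by
        simp only [hcorr, mul_add, mul_sub, sum_add_distrib,
          sum_sub_distrib, mul_ite, mul_one, mul_zero, ite_and, sum_ite_irrel, sum_const_zero,
          sum_ite_eq', mem_univ, if_true, hskew x y]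
        simp only [← sum_mul, hrow, hcol]
        ring

theorem IsTournament.exists_perm_weights (hc : IsTournament c) (hcard : 3 ≤ Fintype.card X)
    {G : X → X → ℝ} (hskew : ∀ s t, G t s = -G s t) (hrow : ∀ s, ∑ t, G s t = 0) :
    ∃ W : Perm X → ℝ, (∀ τ, 0 ≤ W τ) ∧ ∑ τ, W τ = 1 ∧
      ∀ x y, x ≠ y → (1 / 2 < ∑ τ, (if c (τ x) (τ y) then W τ else 0) ↔ 0 < G x y) := by
  set H : Perm X → ℝ := fun τ => ∑ s, ∑ t, G s t * signedAdj c (τ s) (τ t)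
  set M : ℝ := 1 + ∑ τ, |H τ|
  set N : ℝ := ((Fintype.card X).factorial : ℝ)
  have hM : 0 < M := by positivity
  have hN : 0 < N := by positivity
  have hHM : ∀ τ, -H τ ≤ M := fun τ => by
    linarith [neg_le_abs (H τ), single_le_sum (fun σ _ => abs_nonneg (H σ)) (mem_univ τ)]
  have hH : ∑ τ, H τ = 0 := by
    rw [sum_comm]
    refine sum_eq_zero fun s _ => ?_
    rw [sum_comm]
    exact sum_eq_zero fun t _ => by rw [← mul_sum, sum_perm_signedAdj, mul_zero]
  have hMH : ∑ τ, (M + H τ) = N * M := by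
    rw [sum_add_distrib, hH, sum_const, card_univ, Fintype.card_perm, nsmul_eq_mul, add_zero]
  refine ⟨fun τ => (M + H τ) / (N * M), fun τ => div_nonneg (by linarith [hHM τ]) (by positivity),
    by rw [← sum_div, hMH, div_self (by positivity)], fun x y hxy => ?_⟩
  obtain ⟨K, hK, hKG⟩ := hc.exists_sum_perm_mul_signedAdj hcard hskew hrow hxy
  have hmargin : ∑ τ, (if c (τ x) (τ y) then (M + H τ) / (N * M) else 0)
      = 1 / 2 + K * G x y / (2 * N * M) := by
    calc _ = ∑ τ, ((M + H τ) + M * signedAdj c (τ x) (τ y) + H τ * signedAdj c (τ x) (τ y))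
          / (2 * N * M) := sum_congr rfl fun τ _ => by
            rw [← mul_boole, hc.ite_rel_eq (τ.injective.ne hxy)]
            field_simp
            ring
      _ = 1 / 2 + K * G x y / (2 * N * M) := by
            rw [← sum_div, sum_add_distrib, sum_add_distrib, hMH, ← mul_sum, sum_perm_signedAdj,
              hKG]
            field_simp
            ring
  rw [hmargin, lt_add_iff_pos_right, div_pos_iff_of_pos_right (by positivity),
    mul_pos_iff_of_pos_left hK]

end Correlation

theorem mem_majCl_of_weights {D : Set (X → X → Prop)} {d : X → X → Prop} (hd : IsTournament d)
    {ι : Type*} [Fintype ι] {m : ι → X → X → Prop} (hm : ∀ i, m i ∈ D) {W : ι → ℝ}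
    (hW : ∀ i, 0 ≤ W i) (hW1 : ∑ i, W i = 1)
    (hmaj : ∀ x y, x ≠ y → (d x y ↔ 1 / 2 < ∑ i, if m i x y then W i else 0)) :
    d ∈ majCl D := by
  set w : (X → X → Prop) → ℝ := fun c => ∑ i with m i = c, W i
  have hw_range : ∀ c, w c ≠ 0 → c ∈ Set.range m := fun c hc => by
    obtain ⟨i, hi, -⟩ := exists_ne_zero_of_sum_ne_zero hc
    exact ⟨i, (mem_filter.mp hi).2⟩
  have hw_cond : ∀ S : Set (X → X → Prop), ∑ᶠ c ∈ S, w c = ∑ i with m i ∈ S, W i := fun S => by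
    rw [finsum_mem_def, ← finsum_sum_filter m]
    refine finsum_congr fun c => ?_
    rw [filter_filter]
    by_cases hc : c ∈ S
    · rw [Set.indicator_of_mem hc]
      exact sum_congr (filter_congr fun i _ => ⟨fun h => ⟨h ▸ hc, h⟩, And.right⟩) fun _ _ => rfl
    · rw [Set.indicator_of_notMem hc, sum_eq_zero]
      exact fun i hi => absurd ((mem_filter.mp hi).2.2 ▸ (mem_filter.mp hi).2.1) hc
  refine ⟨hd, w, fun c => ⟨sum_nonneg fun i _ => hW i, ?_⟩, fun c hc => ?_,
    (Set.finite_range m).subset hw_range, by rw [finsum_sum_filter, hW1], fun x y hxy => ?_⟩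
  · exact hW1 ▸ sum_le_sum_of_subset_of_nonneg (filter_subset _ _) fun i _ _ => hW i
  · obtain ⟨i, rfl⟩ := hw_range c hc
    exact hm i
  · rw [hmaj x y hxy, hw_cond, sum_filter]
    simp only [Set.mem_ofPred_eq, hm, true_and]

theorem PseudoBalanced.exists_skew {c : X → X → Prop} (hc : IsTournament c)
    (hpb : PseudoBalanced c) :
    ∃ G : X → X → ℝ, (∀ s t, G t s = -G s t) ∧ (∀ s, ∑ t, G s t = 0) ∧
      ∀ x y, x ≠ y → (c x y ↔ 0 < G x y) := by
  obtain ⟨w, hw, hbal, hdom⟩ := hpb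
  refine ⟨fun s t => w s t - w t s, fun s t => by ring, fun s => ?_, fun x y hxy => ?_⟩
  · have hrow : ∑ t ∈ univ.erase s, w s t = ((Fintype.card X : ℝ) - 1) / 2 := by
      rw [← hbal s, ← finsum_mem_coe_finset]
      congr
      ext t
      simp
    show ∑ t, (w s t - w t s) = 0
    rw [← sum_erase univ (f := fun t => w s t - w t s) (sub_self (w s s)),
      sum_congr rfl fun t ht => by rw [(hw s t (ne_of_mem_erase ht).symm).2.2]]
    simp only [sub_sub_eq_add_sub, sum_sub_distrib, sum_add_distrib, hrow, sum_const,
      card_erase_of_mem (mem_univ s), card_univ, nsmul_eq_mul, mul_one]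
    rw [Nat.cast_pred (Fintype.card_pos_iff.mpr ⟨s⟩)]
    ring
  · have hyx := (hw x y hxy).2.2
    constructor
    · intro h
      linarith [hdom x y hxy h]
    · intro h
      by_contra hn
      linarith [hdom y x hxy.symm (hc.rel_of_not_rel hxy hn)]

end

theorem stmt17 [Fintype X] (hcard : 3 ≤ Fintype.card X)
    (D : Set (X → X → Prop)) (hne : D.Nonempty) (hT : ∀ c ∈ D, IsTournament c)
    (hsym : SymmetricSet D)
    (c : X → X → Prop) (hc : IsTournament c) (hpb : PseudoBalanced c) :
    c ∈ majCl D := by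
  classical
  obtain ⟨c₀, hc₀⟩ := hne
  obtain ⟨G, hskew, hrow, hG⟩ := hpb.exists_skew hc
  obtain ⟨W, hW, hW1, hmargin⟩ := (hT c₀ hc₀).exists_perm_weights hcard hskew hrow
  refine mem_majCl_of_weights hc (m := fun τ : Perm X => permAct τ⁻¹ c₀)
    (fun τ => hsym τ⁻¹ c₀ hc₀) hW hW1 fun x y hxy => ?_
  rw [hG x y hxy, ← hmargin x y hxy]
  rfl
end
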